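/- Suppose P₁ ∈ G_{Δ₂,Δ₁}, P₂ ∈ G_{Δ₃,Δ₂}, …, P_t ∈ G_{Δ_{t+1},Δ_t} are r×r row-stochastic matrices, where Δ_{t+1} = (⟨r⟩) is the trivial partition and Δ₁ = ({j},K^c)_{j∈K} for some nonempty K ⊆ ⟨r⟩. Then (P_t P_{t-1}⋯P₁)^K is a stable matrix and every row of it equals (P_t^{-+}P_{t-1}^{-+}⋯P₁^{-+})^{∪_{j∈K}{{j}}}, the restriction of the single-row grouped product to the singleton-labeled columns. -/

import Mathlib

/-- Backwards product `M (t-1) * ⋯ * M 1 * M 0` of a chain of composable real matrices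
(`M b` maps — acting on row vectors on the right — from index `b.succ` to `b.castSucc`). -/
noncomputable def revChainProd : ∀ (t : ℕ) (τ : Fin (t + 1) → Type) [∀ i, Fintype (τ i)]
    [∀ i, DecidableEq (τ i)]
    (_ : ∀ b : Fin t, Matrix (τ b.succ) (τ b.castSucc) ℝ),
    Matrix (τ (Fin.last t)) (τ 0) ℝ
  | 0, τ, _, _, _ => (1 : Matrix (τ 0) (τ 0) ℝ)
  | (t + 1), τ, _, _, M =>
      revChainProd t (fun i => τ i.succ) (fun b => M b.succ) * M 0

/-- `P` is `[Δ]`-stable on `Sg` (real version). -/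
def IsStableOn {m n : ℕ} (P : Matrix (Fin m) (Fin n) ℝ)
    (Δ : Finpartition (Finset.univ : Finset (Fin m)))
    (Sg : Finpartition (Finset.univ : Finset (Fin n))) : Prop :=
  ∀ K ∈ Δ.parts, ∀ L ∈ Sg.parts, ∀ i ∈ K, ∀ i' ∈ K,
    ∑ j ∈ L, P i j = ∑ j ∈ L, P i' j

/-! Grouping is multiplicative: the block masses of `P (t-1) ⋯ P 0` (the mass that a row in a
block of `Δ t` puts on a block of `Δ 0`) are the entries of `g (t-1) ⋯ g 0`, by induction on `t`,
splitting the inner sum of each matrix product along the blocks. When `Δ t` is trivial and `{j}`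
is a block of `Δ 0`, that mass is the `j`-th column itself, which is thus the same in every row. -/

open Finset

section

variable {α : Type} [Fintype α] [DecidableEq α]

theorem Finpartition.sum_univ_eq_sum_parts {M : Type*} [AddCommMonoid M]
    (Δ : Finpartition (univ : Finset α)) (f : α → M) :
    ∑ k, f k = ∑ B : Δ.parts, ∑ k ∈ (B : Finset α), f k := by
  conv_lhs => rw [← Δ.biUnion_parts, sum_biUnion Δ.supIndep.pairwiseDisjoint]
  exact (sum_attach Δ.parts _).symm

theorem sum_mul_apply_eq_sum_parts {ι κ R : Type*} [NonUnitalNonAssocSemiring R]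
    (Q : Matrix ι α R) (P : Matrix α κ R)
    (Δ : Finpartition (univ : Finset α)) (L : Finset κ) (c : Δ.parts → R)
    (hc : ∀ B : Δ.parts, ∀ k ∈ (B : Finset α), ∑ j ∈ L, P k j = c B) (i : ι) :
    ∑ j ∈ L, (Q * P) i j = ∑ B : Δ.parts, (∑ k ∈ (B : Finset α), Q i k) * c B := by
  calc ∑ j ∈ L, (Q * P) i j
      = ∑ k, Q i k * ∑ j ∈ L, P k j := by
        simp only [Matrix.mul_apply, mul_sum]
        exact sum_comm
    _ = ∑ B : Δ.parts, ∑ k ∈ (B : Finset α), Q i k * ∑ j ∈ L, P k j :=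
        Δ.sum_univ_eq_sum_parts _
    _ = ∑ B : Δ.parts, (∑ k ∈ (B : Finset α), Q i k) * c B := by
        refine sum_congr rfl fun B _ => ?_
        rw [sum_mul]
        exact sum_congr rfl fun k hk => by rw [hc B k hk]

theorem sum_revChainProd_apply_eq_revChainProd_parts (t : ℕ)
    (Δ : Fin (t + 1) → Finpartition (univ : Finset α)) (P : Fin t → Matrix α α ℝ)
    (g : ∀ b : Fin t, Matrix (Δ b.succ).parts (Δ b.castSucc).parts ℝ)
    (hg : ∀ (b : Fin t) (Kp : (Δ b.succ).parts) (L : (Δ b.castSucc).parts),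
      ∀ i ∈ (Kp : Finset α), ∑ j ∈ (L : Finset α), P b i j = g b Kp L)
    (K' : (Δ (Fin.last t)).parts) (i : α) (hi : i ∈ (K' : Finset α)) (L : (Δ 0).parts) :
    ∑ j ∈ (L : Finset α), revChainProd t (fun _ => α) P i j =
      revChainProd t (fun b => (Δ b).parts) g K' L := by
  induction t with
  | zero =>
    simp only [revChainProd, Matrix.one_apply, sum_ite_eq]
    by_cases hiL : i ∈ (L : Finset α)
    · rw [if_pos hiL, if_pos (Subtype.ext ((Δ 0).eq_of_mem_parts K'.2 L.2 hi hiL))]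
    · rw [if_neg hiL, if_neg]
      rintro rfl
      exact hiL hi
  | succ t ih =>
    simp only [revChainProd]
    rw [sum_mul_apply_eq_sum_parts _ _ (Δ (1 : Fin (t + 2))) _ (fun B => g 0 B L)
      (fun B => hg 0 B L)]
    refine (sum_congr rfl fun B _ => ?_).trans Matrix.mul_apply.symm
    rw [ih (fun b => Δ b.succ) (fun b => P b.succ) (fun b => g b.succ) (fun b => hg b.succ)
      K' hi B]

end

theorem degroot_grouped_partial_consensus_general (r : ℕ) (t : ℕ)
    (Δ : Fin (t + 1) → Finpartition (Finset.univ : Finset (Fin r)))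
    (P : Fin t → Matrix (Fin r) (Fin r) ℝ)
    (g : ∀ b : Fin t, Matrix ↥(Δ b.succ).parts ↥(Δ b.castSucc).parts ℝ)
    (hg : ∀ (b : Fin t) (Kp : ↥(Δ b.succ).parts) (L : ↥(Δ b.castSucc).parts),
      ∀ i ∈ (Kp : Finset (Fin r)), ∑ j ∈ (L : Finset (Fin r)), P b i j = g b Kp L)
    (hΔtop : (Δ (Fin.last t)).parts = {Finset.univ})
    (K : Finset (Fin r))
    (hΔ₁ : (Δ 0).parts =
      (K.image fun j => ({j} : Finset (Fin r))) ∪ (if Kᶜ = ∅ then ∅ else {Kᶜ})) :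
    (∀ j ∈ K, ∀ i i' : Fin r,
      revChainProd t (fun _ => Fin r) P i j = revChainProd t (fun _ => Fin r) P i' j) ∧
    (∀ j ∈ K, ∀ i : Fin r,
      ∀ (hU : Finset.univ ∈ (Δ (Fin.last t)).parts) (hj : {j} ∈ (Δ 0).parts),
        revChainProd t (fun _ => Fin r) P i j =
        revChainProd t (fun i => ↥(Δ i).parts) g ⟨Finset.univ, hU⟩ ⟨{j}, hj⟩) := by
  have row_eq : ∀ j : Fin r, ∀ i : Fin r,
      ∀ (hU : Finset.univ ∈ (Δ (Fin.last t)).parts) (hj : {j} ∈ (Δ 0).parts),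
        revChainProd t (fun _ => Fin r) P i j =
        revChainProd t (fun i => ↥(Δ i).parts) g ⟨Finset.univ, hU⟩ ⟨{j}, hj⟩ := by
    intro j i hU hj
    simpa only [sum_singleton] using
      sum_revChainProd_apply_eq_revChainProd_parts t Δ P g hg ⟨univ, hU⟩ i (mem_univ i) ⟨{j}, hj⟩
  have hU : Finset.univ ∈ (Δ (Fin.last t)).parts := hΔtop ▸ mem_singleton_self _
  refine ⟨fun j hjK i i' => ?_, fun j _ => row_eq j⟩
  have hj : ({j} : Finset (Fin r)) ∈ (Δ 0).parts :=
    hΔ₁ ▸ mem_union_left _ (mem_image_of_mem _ hjK)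
  rw [row_eq j i hU hj, row_eq j i' hU hj]

/-- if the row-stochastic matrices `P_b ∈ G_{Δ_{b+1},Δ_b}` (`b = 1,…,t`),
`Δ_{t+1} = (⟨r⟩)` is trivial and `Δ₁ = ({j},Kᶜ)_{j∈K}`, then `(P_t⋯P₁)^K` is stable and
each of its rows equals the restriction of the single-row grouped product
`P_t^{-+}⋯P₁^{-+}` to the singleton-labeled columns. -/
theorem degroot_grouped_partial_consensus (r : ℕ) (hr : 2 ≤ r) (t : ℕ) (ht : 1 ≤ t)
    (Δ : Fin (t + 1) → Finpartition (Finset.univ : Finset (Fin r)))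
    (P : Fin t → Matrix (Fin r) (Fin r) ℝ)
    (hnonneg : ∀ b, ∀ i j, 0 ≤ P b i j)
    (hrowsum : ∀ b, ∀ i, ∑ j, P b i j = 1)
    (hstab : ∀ b : Fin t, IsStableOn (P b) (Δ b.succ) (Δ b.castSucc))
    (g : ∀ b : Fin t, Matrix ↥(Δ b.succ).parts ↥(Δ b.castSucc).parts ℝ)
    (hg : ∀ (b : Fin t) (Kp : ↥(Δ b.succ).parts) (L : ↥(Δ b.castSucc).parts),
      ∀ i ∈ (Kp : Finset (Fin r)), ∑ j ∈ (L : Finset (Fin r)), P b i j = g b Kp L)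
    (hΔtop : (Δ (Fin.last t)).parts = {Finset.univ})
    (K : Finset (Fin r)) (hK : K.Nonempty)
    (hΔ₁ : (Δ 0).parts =
      (K.image fun j => ({j} : Finset (Fin r))) ∪ (if Kᶜ = ∅ then ∅ else {Kᶜ})) :
    (∀ j ∈ K, ∀ i i' : Fin r,
      revChainProd t (fun _ => Fin r) P i j = revChainProd t (fun _ => Fin r) P i' j) ∧
    (∀ j ∈ K, ∀ i : Fin r,
      ∀ (hU : Finset.univ ∈ (Δ (Fin.last t)).parts) (hj : {j} ∈ (Δ 0).parts),
        revChainProd t (fun _ => Fin r) P i j =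
        revChainProd t (fun i => ↥(Δ i).parts) g ⟨Finset.univ, hU⟩ ⟨{j}, hj⟩) :=
  degroot_grouped_partial_consensus_general r t Δ P g hg hΔtop K hΔ₁
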